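/- The 8-dimensional algebra W(2)-tilde-tilde with basis e_1,...,e_8 and nonzero products e_1e_1=-e_1, e_1e_2=-3e_2, e_1e_3=e_3, e_1e_4=3e_4, e_1e_5=-e_5, e_1e_6=e_6, e_1e_7=e_7, e_1e_8=-e_8, e_2e_1=3e_2, e_3e_1=-2e_3, e_6e_1=2e_3, e_7e_1=2e_3 satisfies both standard degree-3 identities: Σ_{σ∈S_3} sgn(σ)(x_{σ(1)}x_{σ(2)})x_{σ(3)} = 0 and Σ_{σ∈S_3} sgn(σ) x_{σ(3)}(x_{σ(2)}x_{σ(1)}) = 0 for all x_1,x_2,x_3. -/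

import Mathlib

def tbl (F : Type*) [Field F] : Fin 8 → Fin 8 → Fin 8 → F :=
  ![![![-1, 0, 0, 0, 0, 0, 0, 0], ![0, -3, 0, 0, 0, 0, 0, 0], ![0, 0, 1, 0, 0, 0, 0, 0], ![0, 0, 0, 3, 0, 0, 0, 0], ![0, 0, 0, 0, -1, 0, 0, 0], ![0, 0, 0, 0, 0, 1, 0, 0], ![0, 0, 0, 0, 0, 0, 1, 0], ![0, 0, 0, 0, 0, 0, 0, -1]],
    ![![0, 3, 0, 0, 0, 0, 0, 0], ![0, 0, 0, 0, 0, 0, 0, 0], ![0, 0, 0, 0, 0, 0, 0, 0], ![0, 0, 0, 0, 0, 0, 0, 0], ![0, 0, 0, 0, 0, 0, 0, 0], ![0, 0, 0, 0, 0, 0, 0, 0], ![0, 0, 0, 0, 0, 0, 0, 0], ![0, 0, 0, 0, 0, 0, 0, 0]],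
    ![![0, 0, -2, 0, 0, 0, 0, 0], ![0, 0, 0, 0, 0, 0, 0, 0], ![0, 0, 0, 0, 0, 0, 0, 0], ![0, 0, 0, 0, 0, 0, 0, 0], ![0, 0, 0, 0, 0, 0, 0, 0], ![0, 0, 0, 0, 0, 0, 0, 0], ![0, 0, 0, 0, 0, 0, 0, 0], ![0, 0, 0, 0, 0, 0, 0, 0]],
    ![![0, 0, 0, 0, 0, 0, 0, 0], ![0, 0, 0, 0, 0, 0, 0, 0], ![0, 0, 0, 0, 0, 0, 0, 0], ![0, 0, 0, 0, 0, 0, 0, 0], ![0, 0, 0, 0, 0, 0, 0, 0], ![0, 0, 0, 0, 0, 0, 0, 0], ![0, 0, 0, 0, 0, 0, 0, 0], ![0, 0, 0, 0, 0, 0, 0, 0]],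
    ![![0, 0, 0, 0, 0, 0, 0, 0], ![0, 0, 0, 0, 0, 0, 0, 0], ![0, 0, 0, 0, 0, 0, 0, 0], ![0, 0, 0, 0, 0, 0, 0, 0], ![0, 0, 0, 0, 0, 0, 0, 0], ![0, 0, 0, 0, 0, 0, 0, 0], ![0, 0, 0, 0, 0, 0, 0, 0], ![0, 0, 0, 0, 0, 0, 0, 0]],
    ![![0, 0, 2, 0, 0, 0, 0, 0], ![0, 0, 0, 0, 0, 0, 0, 0], ![0, 0, 0, 0, 0, 0, 0, 0], ![0, 0, 0, 0, 0, 0, 0, 0], ![0, 0, 0, 0, 0, 0, 0, 0], ![0, 0, 0, 0, 0, 0, 0, 0], ![0, 0, 0, 0, 0, 0, 0, 0], ![0, 0, 0, 0, 0, 0, 0, 0]],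
    ![![0, 0, 2, 0, 0, 0, 0, 0], ![0, 0, 0, 0, 0, 0, 0, 0], ![0, 0, 0, 0, 0, 0, 0, 0], ![0, 0, 0, 0, 0, 0, 0, 0], ![0, 0, 0, 0, 0, 0, 0, 0], ![0, 0, 0, 0, 0, 0, 0, 0], ![0, 0, 0, 0, 0, 0, 0, 0], ![0, 0, 0, 0, 0, 0, 0, 0]],
    ![![0, 0, 0, 0, 0, 0, 0, 0], ![0, 0, 0, 0, 0, 0, 0, 0], ![0, 0, 0, 0, 0, 0, 0, 0], ![0, 0, 0, 0, 0, 0, 0, 0], ![0, 0, 0, 0, 0, 0, 0, 0], ![0, 0, 0, 0, 0, 0, 0, 0], ![0, 0, 0, 0, 0, 0, 0, 0], ![0, 0, 0, 0, 0, 0, 0, 0]]]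

def mul (F : Type*) [Field F] (x y : Fin 8 → F) : Fin 8 → F :=
  fun k => ∑ i, ∑ j, x i * y j * tbl F i j k

/-! With `φ x = x 0` the coordinate of `e₁`, the product has the shape
`x y = φ x • D y + φ y • N x` for linear maps `D`, `N`, and `φ (x y) = -φ x φ y` is symmetric.
Expanding `(x y) z` and `z (y x)` with this formula writes each as a sum of three terms, each
symmetric in two of the three arguments, and the alternating sum over `S₃` kills every such term. -/

namespace Equiv.Perm

theorem sum_sign_smul_comp_eq_zero_of_swap_invariant {ι α M : Type*} [DecidableEq ι]
    [Fintype ι] [AddCommGroup M] (g : (ι → α) → M) {i j : ι} (hij : i ≠ j)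
    (hg : ∀ v, g (v ∘ swap i j) = g v) (v : ι → α) :
    ∑ σ : Perm ι, (sign σ : ℤ) • g (v ∘ σ) = 0 := by
  refine Finset.sum_ninvolution (· * swap i j) (fun σ => ?_) (fun σ _ => by simpa using hij)
    (fun _ => Finset.mem_univ _) (fun σ => by simp [mul_assoc])
  rw [coe_mul, ← Function.comp_assoc, hg, sign_mul, sign_swap hij]
  simp

theorem sum_sign_smul_fin_three_eq_zero {α M : Type*} [AddCommGroup M]
    {f g₀₁ g₀₂ g₁₂ : α → α → α → M} (hf : ∀ a b c, f a b c = g₀₁ a b c + g₀₂ a b c + g₁₂ a b c)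
    (h₀₁ : ∀ a b c, g₀₁ a b c = g₀₁ b a c) (h₀₂ : ∀ a b c, g₀₂ a b c = g₀₂ c b a)
    (h₁₂ : ∀ a b c, g₁₂ a b c = g₁₂ a c b) (x : Fin 3 → α) :
    ∑ σ : Perm (Fin 3), (sign σ : ℤ) • f (x (σ 0)) (x (σ 1)) (x (σ 2)) = 0 := by
  have hvanish := fun (g : α → α → α → M) (i j : Fin 3) (hij : i ≠ j)
      (hg : ∀ v : Fin 3 → α,
        g (v (swap i j 0)) (v (swap i j 1)) (v (swap i j 2)) = g (v 0) (v 1) (v 2)) =>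
    sum_sign_smul_comp_eq_zero_of_swap_invariant (fun v => g (v 0) (v 1) (v 2)) hij hg x
  simp only [Function.comp_apply] at hvanish
  simp only [hf, smul_add, Finset.sum_add_distrib]
  rw [hvanish g₀₁ 0 1 (by decide) fun _ => (h₀₁ _ _ _).symm,
    hvanish g₀₂ 0 2 (by decide) fun _ => (h₀₂ _ _ _).symm,
    hvanish g₁₂ 1 2 (by decide) fun _ => (h₁₂ _ _ _).symm, add_zero, add_zero]

end Equiv.Perm

section

open Equiv Perm

variable {R V : Type*} [CommRing R] [AddCommGroup V] [Module R V] {φ : V → R} {D N : V →ₗ[R] V}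
  {m : V → V → V}

theorem sum_sign_smul_mul_mul_left_eq_zero (hm : ∀ x y, m x y = φ x • D y + φ y • N x)
    (hφ : ∀ x y, φ (m x y) = φ (m y x)) (x : Fin 3 → V) :
    ∑ σ : Perm (Fin 3), (sign σ : ℤ) • m (m (x (σ 0)) (x (σ 1))) (x (σ 2)) = 0 := by
  refine sum_sign_smul_fin_three_eq_zero (f := fun a b c => m (m a b) c)
    (g₀₁ := fun a b c => φ (m a b) • D c) (g₀₂ := fun a b c => (φ c * φ a) • N (D b))
    (g₁₂ := fun a b c => (φ c * φ b) • N (N a)) (fun a b c => ?_) (fun a b c => by rw [hφ])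
    (fun a b c => by rw [mul_comm]) (fun a b c => by rw [mul_comm]) x
  rw [hm (m a b), hm a, map_add, map_smul, map_smul, smul_add, smul_smul, smul_smul, add_assoc]

theorem sum_sign_smul_mul_mul_right_eq_zero (hm : ∀ x y, m x y = φ x • D y + φ y • N x)
    (hφ : ∀ x y, φ (m x y) = φ (m y x)) (x : Fin 3 → V) :
    ∑ σ : Perm (Fin 3), (sign σ : ℤ) • m (x (σ 2)) (m (x (σ 1)) (x (σ 0))) = 0 := by
  refine sum_sign_smul_fin_three_eq_zero (f := fun a b c => m c (m b a))
    (g₀₁ := fun a b c => φ (m b a) • N c) (g₀₂ := fun a b c => (φ c * φ a) • D (N b))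
    (g₁₂ := fun a b c => (φ c * φ b) • D (D a)) (fun a b c => ?_) (fun a b c => by rw [hφ])
    (fun a b c => by rw [mul_comm]) (fun a b c => by rw [mul_comm]) x
  rw [hm c, hm b a, map_add, map_smul, map_smul, smul_add, smul_smul, smul_smul]
  abel

end

-- Index `k : Fin 8` is the basis vector `e_{k+1}` of the paper.
namespace W2tt

variable (F : Type*) [Field F]

def leftMulE₁ : (Fin 8 → F) →ₗ[F] (Fin 8 → F) :=
  LinearMap.pi ![-LinearMap.proj 0, (-3 : F) • LinearMap.proj 1, LinearMap.proj 2,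
    (3 : F) • LinearMap.proj 3, -LinearMap.proj 4, LinearMap.proj 5, LinearMap.proj 6,
    -LinearMap.proj 7]

-- Right multiplication by `e₁` on the span of `e₂, …, e₈`, sending `e₁` to `0`.
def rightMulE₁ : (Fin 8 → F) →ₗ[F] (Fin 8 → F) :=
  LinearMap.pi ![0, (3 : F) • LinearMap.proj 1,
    (-2 : F) • LinearMap.proj 2 + (2 : F) • LinearMap.proj 5 + (2 : F) • LinearMap.proj 6,
    0, 0, 0, 0, 0]

theorem mul_eq_leftMulE₁_add_rightMulE₁ (x y : Fin 8 → F) :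
    mul F x y = x 0 • leftMulE₁ F y + y 0 • rightMulE₁ F x := by
  funext k
  fin_cases k <;> simp [mul, tbl, leftMulE₁, rightMulE₁, Fin.sum_univ_eight] <;> ring

theorem mul_apply_zero (x y : Fin 8 → F) : mul F x y 0 = -(x 0 * y 0) := by
  simp [mul, tbl, Fin.sum_univ_eight]

end W2tt

theorem W2tt_satisfies_st3_general (F : Type*) [Field F] (x : Fin 3 → (Fin 8 → F)) :
    (∑ σ : Equiv.Perm (Fin 3), (Equiv.Perm.sign σ : ℤ) •
        mul F (mul F (x (σ 0)) (x (σ 1))) (x (σ 2)) = 0) ∧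
    (∑ σ : Equiv.Perm (Fin 3), (Equiv.Perm.sign σ : ℤ) •
        mul F (x (σ 2)) (mul F (x (σ 1)) (x (σ 0))) = 0) := by
  have hφ (y z : Fin 8 → F) : mul F y z 0 = mul F z y 0 := by
    rw [W2tt.mul_apply_zero, W2tt.mul_apply_zero, mul_comm]
  exact ⟨sum_sign_smul_mul_mul_left_eq_zero (W2tt.mul_eq_leftMulE₁_add_rightMulE₁ F) hφ x,
    sum_sign_smul_mul_mul_right_eq_zero (W2tt.mul_eq_leftMulE₁_add_rightMulE₁ F) hφ x⟩

/-- `W(2)`-tilde-tilde satisfies both standard degree-3 identities `st³₁` and `st³₂`. -/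
theorem W2tt_satisfies_st3 (F : Type*) [Field F] [CharZero F] (x : Fin 3 → (Fin 8 → F)) :
    (∑ σ : Equiv.Perm (Fin 3), (Equiv.Perm.sign σ : ℤ) •
        mul F (mul F (x (σ 0)) (x (σ 1))) (x (σ 2)) = 0) ∧
    (∑ σ : Equiv.Perm (Fin 3), (Equiv.Perm.sign σ : ℤ) •
        mul F (x (σ 2)) (mul F (x (σ 1)) (x (σ 0))) = 0) :=
  W2tt_satisfies_st3_general F x
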